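/- (Proposition 4.3) Suppose that for every mode d = 1,…,D, the mode-d similarity graph (vertex set {1,…,n_d}, edge {i,j} iff w_{d,ij} > 0) is connected. Then there exists γ_max ≥ 0 such that for every γ ≥ γ_max, the unique minimizer of the CoCo objective F_γ is the grand-mean vector x̄·1, where x̄ = (1/n)⟨x, 1⟩ and 1 ∈ ℝ^n is the all-ones vector. -/

import Mathlib

/-!
The penalty `P(u) = Σ_d Σ_{i<j} w_{d,ij} ‖A_{d,ij} u‖₂` is positively homogeneous and invariant
under adding constants, and since every mode graph is connected it vanishes only on constant
tensors. Compactness of the unit sphere of the mean-zero subspace then gives `c‖v‖_∞ ≤ P(v)` there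
for some `c > 0`. With `a = x - x̄·1` and `m` the mean of `u`,
`F_γ(u) - F_γ(x̄·1) = ½‖u - x̄·1‖² - ⟨a, u⟩ + γ P(u)` and
`⟨a, u⟩ = ⟨a, u - m·1⟩ ≤ (Σ|aᵢ|) ‖u - m·1‖_∞ ≤ γ c ‖u - m·1‖_∞ ≤ γ P(u)` once `γ ≥ Σ|aᵢ| / c`,
so `F_γ(u) ≥ F_γ(x̄·1) + ½‖u - x̄·1‖²`.
-/

open scoped BigOperators
open Finset MeasureTheory

noncomputable section

/-- The full (vectorized) index set of a `D`-way tensor with mode sizes `n d`. -/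
abbrev TIdx {D : ℕ} (n : Fin D → ℕ) : Type := ∀ d, Fin (n d)

/-- The index set of a mode-`d` subarray: all modes except `d`. -/
abbrev RIdx {D : ℕ} (n : Fin D → ℕ) (d : Fin D) : Type :=
  ∀ d' : {x : Fin D // x ≠ d}, Fin (n d'.1)

/-- Insert the mode-`d` index `i` into the partial index `g`. -/
def insIdx {D : ℕ} (n : Fin D → ℕ) (d : Fin D) (g : RIdx n d) (i : Fin (n d)) : TIdx n :=
  fun d' => if h : d' = d then h.symm ▸ i else g ⟨d', h⟩

/-- The matrix `A_{d,ij} = I ⊗ ⋯ ⊗ (e_i - e_j)ᵀ ⊗ ⋯ ⊗ I`, realized on the canonical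
multi-index sets: applied to `u`, the `g`-th entry is `u(.., i, ..) - u(.., j, ..)`. -/
def Amat {D : ℕ} (n : Fin D → ℕ) (d : Fin D) (i j : Fin (n d)) :
    Matrix (RIdx n d) (TIdx n) ℝ :=
  Matrix.of fun g f =>
    (if f = insIdx n d g i then (1 : ℝ) else 0) - (if f = insIdx n d g j then (1 : ℝ) else 0)

/-- Euclidean (ℓ₂) norm of a finitely-indexed real vector. -/
def l2 {κ : Type*} [Fintype κ] (v : κ → ℝ) : ℝ := Real.sqrt (∑ a, v a ^ 2)

/-- The mode-`d` fusion penalty `R_d(u) = Σ_{i<j} w_{d,ij} ‖A_{d,ij} u‖₂`. -/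
def Rmode {D : ℕ} (n : Fin D → ℕ) (d : Fin D) (w : Fin (n d) → Fin (n d) → ℝ)
    (u : TIdx n → ℝ) : ℝ :=
  ∑ i, ∑ j, if i < j then w i j * l2 ((Amat n d i j).mulVec u) else 0

/-- The CoCo objective `F_γ(u) = (1/2)‖x - u‖₂² + γ Σ_d Σ_{i<j} w_{d,ij} ‖A_{d,ij} u‖₂`. -/
def coco {D : ℕ} (n : Fin D → ℕ) (x : TIdx n → ℝ) (γ : ℝ)
    (w : ∀ d, Fin (n d) → Fin (n d) → ℝ) (u : TIdx n → ℝ) : ℝ :=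
  (1 / 2) * ∑ f, (x f - u f) ^ 2 + γ * ∑ d, Rmode n d (w d) u

/-- The mode-`d` similarity graph is connected: any two mode-`d` indices are joined by a finite
path each of whose steps is a pair `{a,b}` with strictly positive weight. -/
def ModeConnected {D : ℕ} (n : Fin D → ℕ) (d : Fin D)
    (w : Fin (n d) → Fin (n d) → ℝ) : Prop :=
  ∀ i j : Fin (n d),
    Relation.ReflTransGen (fun a b => (a < b ∧ 0 < w a b) ∨ (b < a ∧ 0 < w b a)) i j

section MeanZero

variable {ι : Type*} [Fintype ι]

/-- Equal to `0` when `ι` is empty, since `x / 0 = 0`. -/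
def mean (v : ι → ℝ) : ℝ := (∑ i, v i) / Fintype.card ι

lemma sum_sub_mean (v : ι → ℝ) : ∑ i, (v i - mean v) = 0 := by
  rcases isEmpty_or_nonempty ι with hι | hι
  · simp
  · rw [sum_sub_distrib, sum_const, card_univ, nsmul_eq_mul, mean,
      mul_div_cancel₀ _ (by positivity), sub_self]

lemma dotProduct_le_sum_abs_mul_norm (a v : ι → ℝ) : a ⬝ᵥ v ≤ (∑ i, |a i|) * ‖v‖ := by
  rw [sum_mul]
  refine sum_le_sum fun i _ => ?_
  calc a i * v i ≤ |a i| * |v i| := by rw [← abs_mul]; exact le_abs_self _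
    _ ≤ |a i| * ‖v‖ := by gcongr; exact norm_le_pi_norm v i

structure IsFusionPenalty (P : (ι → ℝ) → ℝ) : Prop where
  continuous : Continuous P
  smul : ∀ t : ℝ, 0 ≤ t → ∀ v, P (t • v) = t * P v
  add_const : ∀ v c, P (v + fun _ => c) = P v
  pos : ∀ v, ∑ i, v i = 0 → v ≠ 0 → 0 < P v

namespace IsFusionPenalty

variable {P : (ι → ℝ) → ℝ}

lemma map_const (hP : IsFusionPenalty P) (c : ℝ) : P (fun _ => c) = 0 := by
  simpa using (hP.add_const 0 c).trans (by simpa using hP.smul 0 le_rfl 0)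

lemma exists_pos_mul_norm_le (hP : IsFusionPenalty P) :
    ∃ c > 0, ∀ v : ι → ℝ, ∑ i, v i = 0 → c * ‖v‖ ≤ P v := by
  set S := Metric.sphere (0 : ι → ℝ) 1 ∩ {v | ∑ i, v i = 0}
  have hS : IsCompact S :=
    (isCompact_sphere 0 1).inter_right (isClosed_eq (by fun_prop) continuous_const)
  obtain ⟨c, hc, hcS⟩ := hS.exists_forall_le' hP.continuous.continuousOn fun v hv =>
    hP.pos v hv.2 (ne_zero_of_mem_unit_sphere ⟨v, hv.1⟩)
  refine ⟨c, hc, fun v hv => ?_⟩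
  rcases eq_or_ne v 0 with rfl | hv0
  · rw [norm_zero, mul_zero]; exact (hP.map_const 0).ge
  · have hnorm : 0 < ‖v‖ := norm_pos_iff.2 hv0
    have hunit : ‖v‖⁻¹ • v ∈ S :=
      ⟨by simp [norm_smul, hnorm.ne'], by simp [← mul_sum, hv]⟩
    calc c * ‖v‖ ≤ P (‖v‖⁻¹ • v) * ‖v‖ := by gcongr; exact hcS _ hunit
      _ = P v := by rw [hP.smul _ (by positivity), mul_right_comm, inv_mul_cancel₀ hnorm.ne',
          one_mul]

lemma exists_dotProduct_le_mul (hP : IsFusionPenalty P) {a : ι → ℝ} (ha : ∑ i, a i = 0) :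
    ∃ γmax ≥ 0, ∀ γ ≥ γmax, ∀ u, a ⬝ᵥ u ≤ γ * P u := by
  obtain ⟨c, hc, hcP⟩ := hP.exists_pos_mul_norm_le
  refine ⟨(∑ i, |a i|) / c, by positivity, fun γ hγ u => ?_⟩
  set v : ι → ℝ := u + fun _ => -mean u
  have hv : a ⬝ᵥ u = a ⬝ᵥ v := by
    simp only [v, dotProduct_add]; simp [dotProduct, ← sum_mul, ha]
  calc a ⬝ᵥ u = a ⬝ᵥ v := hv
    _ ≤ (∑ i, |a i|) * ‖v‖ := dotProduct_le_sum_abs_mul_norm a v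
    _ ≤ γ * (c * ‖v‖) := by
      rw [← mul_assoc]; gcongr; rwa [ge_iff_le, div_le_iff₀ hc] at hγ
    _ ≤ γ * P v := by
      gcongr
      · exact le_trans (by positivity) hγ
      · exact hcP v (by simpa [v, sub_eq_add_neg] using sum_sub_mean u)
    _ = γ * P u := by rw [hP.add_const]

theorem exists_add_half_sum_sq_le (hP : IsFusionPenalty P) (x : ι → ℝ) :
    ∃ γmax ≥ 0, ∀ γ ≥ γmax, ∀ u : ι → ℝ,
      (1 / 2) * ∑ i, (x i - mean x) ^ 2 + γ * P (fun _ => mean x)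
          + (1 / 2) * ∑ i, (u i - mean x) ^ 2
        ≤ (1 / 2) * ∑ i, (x i - u i) ^ 2 + γ * P u := by
  obtain ⟨γmax, hγmax, hdot⟩ := hP.exists_dotProduct_le_mul (sum_sub_mean x)
  refine ⟨γmax, hγmax, fun γ hγ u => ?_⟩
  have hsq : ∑ i, (x i - u i) ^ 2 = ∑ i, (x i - mean x) ^ 2
      - 2 * ((fun i => x i - mean x) ⬝ᵥ u) + ∑ i, (u i - mean x) ^ 2 := by
    calc ∑ i, (x i - u i) ^ 2 = ∑ i, ((x i - mean x) ^ 2 - 2 * ((x i - mean x) * u i)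
          + (u i - mean x) ^ 2 + 2 * mean x * (x i - mean x)) := by congr! 1; ring
      _ = _ := by
        rw [sum_add_distrib, ← mul_sum, sum_sub_mean, mul_zero, add_zero, sum_add_distrib,
          sum_sub_distrib, ← mul_sum]; rfl
  rw [hP.map_const, hsq]
  linarith [hdot γ hγ u]

end IsFusionPenalty

end MeanZero

section L2

variable {κ : Type*} [Fintype κ]

lemma l2_eq_norm (v : κ → ℝ) : l2 v = ‖(WithLp.toLp 2 v : EuclideanSpace ℝ κ)‖ := by
  simp [l2, EuclideanSpace.norm_eq]

lemma l2_nonneg (v : κ → ℝ) : 0 ≤ l2 v := Real.sqrt_nonneg _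

lemma l2_eq_zero {v : κ → ℝ} : l2 v = 0 ↔ v = 0 := by
  rw [l2_eq_norm, norm_eq_zero, WithLp.toLp_eq_zero]

lemma l2_smul (t : ℝ) (v : κ → ℝ) : l2 (t • v) = |t| * l2 v := by
  rw [l2_eq_norm, l2_eq_norm, WithLp.toLp_smul, norm_smul, Real.norm_eq_abs]

lemma continuous_l2 : Continuous (l2 : (κ → ℝ) → ℝ) := by
  simp_rw [funext l2_eq_norm]; fun_prop

end L2

open Matrix

section Penalty

variable {D : ℕ} (n : Fin D → ℕ)

lemma Amat_mulVec_apply (d : Fin D) (i j : Fin (n d)) (u : TIdx n → ℝ) (g : RIdx n d) :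
    (Amat n d i j *ᵥ u) g = u (insIdx n d g i) - u (insIdx n d g j) := by
  simp [mulVec, dotProduct, Amat, sub_mul, sum_sub_distrib]

lemma Amat_mulVec_const (d : Fin D) (i j : Fin (n d)) (c : ℝ) :
    Amat n d i j *ᵥ (fun _ => c) = 0 := by
  ext g; simp [Amat_mulVec_apply]

lemma insIdx_restrict (d : Fin D) (f : TIdx n) (i : Fin (n d)) :
    insIdx n d (fun d' => f d'.1) i = Function.update f d i := by
  funext d'
  rcases eq_or_ne d' d with rfl | h
  · simp [insIdx]
  · simp [insIdx, h]

def fusionPenalty (w : ∀ d, Fin (n d) → Fin (n d) → ℝ) (u : TIdx n → ℝ) : ℝ :=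
  ∑ d, Rmode n d (w d) u

variable {n}

lemma Rmode_term_nonneg {d : Fin D} {w : Fin (n d) → Fin (n d) → ℝ} (hw : ∀ i j, 0 ≤ w i j)
    (u : TIdx n → ℝ) (i j : Fin (n d)) :
    0 ≤ if i < j then w i j * l2 (Amat n d i j *ᵥ u) else 0 := by
  split_ifs
  exacts [mul_nonneg (hw i j) (l2_nonneg _), le_rfl]

lemma fusionPenalty_nonneg {w : ∀ d, Fin (n d) → Fin (n d) → ℝ} (hw : ∀ d i j, 0 ≤ w d i j)
    (u : TIdx n → ℝ) : 0 ≤ fusionPenalty n w u :=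
  sum_nonneg fun d _ => sum_nonneg fun i _ => sum_nonneg fun j _ => Rmode_term_nonneg (hw d) u i j

lemma continuous_fusionPenalty (w : ∀ d, Fin (n d) → Fin (n d) → ℝ) :
    Continuous (fusionPenalty n w) := by
  unfold fusionPenalty Rmode
  refine continuous_finsetSum _ fun d _ => continuous_finsetSum _ fun i _ =>
    continuous_finsetSum _ fun j _ => ?_
  split_ifs
  · exact continuous_const.mul (continuous_l2.comp (continuous_const.matrix_mulVec continuous_id))
  · exact continuous_const

lemma fusionPenalty_smul (w : ∀ d, Fin (n d) → Fin (n d) → ℝ) {t : ℝ} (ht : 0 ≤ t)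
    (v : TIdx n → ℝ) : fusionPenalty n w (t • v) = t * fusionPenalty n w v := by
  simp only [fusionPenalty, Rmode, mulVec_smul, l2_smul, abs_of_nonneg ht, mul_sum, mul_ite,
    mul_zero, mul_left_comm]

lemma fusionPenalty_add_const (w : ∀ d, Fin (n d) → Fin (n d) → ℝ) (v : TIdx n → ℝ) (c : ℝ) :
    fusionPenalty n w (v + fun _ => c) = fusionPenalty n w v := by
  simp only [fusionPenalty, Rmode, mulVec_add, Amat_mulVec_const, add_zero]

lemma apply_insIdx_eq_of_fusionPenalty_eq_zero_of_lt {w : ∀ d, Fin (n d) → Fin (n d) → ℝ}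
    (hw : ∀ d i j, 0 ≤ w d i j) {v : TIdx n → ℝ} (hv : fusionPenalty n w v = 0)
    {d : Fin D} {i j : Fin (n d)} (hij : i < j) (hpos : 0 < w d i j) (g : RIdx n d) :
    v (insIdx n d g i) = v (insIdx n d g j) := by
  have hd := (sum_eq_zero_iff_of_nonneg fun d _ => sum_nonneg fun i _ => sum_nonneg fun j _ =>
    Rmode_term_nonneg (hw d) v i j).1 hv d (mem_univ d)
  have hi := (sum_eq_zero_iff_of_nonneg fun i _ => sum_nonneg fun j _ =>
    Rmode_term_nonneg (hw d) v i j).1 hd i (mem_univ i)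
  have hj := (sum_eq_zero_iff_of_nonneg fun j _ =>
    Rmode_term_nonneg (hw d) v i j).1 hi j (mem_univ j)
  simp only [hij, if_true, mul_eq_zero, hpos.ne', false_or, l2_eq_zero] at hj
  simpa [Amat_mulVec_apply, sub_eq_zero] using congrFun hj g

lemma apply_insIdx_eq_of_fusionPenalty_eq_zero {w : ∀ d, Fin (n d) → Fin (n d) → ℝ}
    (hw : ∀ d i j, 0 ≤ w d i j) {v : TIdx n → ℝ} (hv : fusionPenalty n w v = 0) {d : Fin D}
    (hconn : ModeConnected n d (w d)) (g : RIdx n d) (i j : Fin (n d)) :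
    v (insIdx n d g i) = v (insIdx n d g j) := by
  induction hconn i j with
  | refl => rfl
  | tail _ hedge ih =>
    rcases hedge with ⟨hlt, hpos⟩ | ⟨hlt, hpos⟩
    · exact ih.trans (apply_insIdx_eq_of_fusionPenalty_eq_zero_of_lt hw hv hlt hpos g)
    · exact ih.trans (apply_insIdx_eq_of_fusionPenalty_eq_zero_of_lt hw hv hlt hpos g).symm

lemma apply_update_eq_of_fusionPenalty_eq_zero {w : ∀ d, Fin (n d) → Fin (n d) → ℝ}
    (hw : ∀ d i j, 0 ≤ w d i j) {v : TIdx n → ℝ} (hv : fusionPenalty n w v = 0) {d : Fin D}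
    (hconn : ModeConnected n d (w d)) (f : TIdx n) (i : Fin (n d)) :
    v (Function.update f d i) = v f := by
  conv_rhs => rw [← Function.update_eq_self d f]
  rw [← insIdx_restrict, ← insIdx_restrict]
  exact apply_insIdx_eq_of_fusionPenalty_eq_zero hw hv hconn _ i (f d)

lemma apply_eq_of_fusionPenalty_eq_zero {w : ∀ d, Fin (n d) → Fin (n d) → ℝ}
    (hw : ∀ d i j, 0 ≤ w d i j) (hconn : ∀ d, ModeConnected n d (w d)) {v : TIdx n → ℝ}
    (hv : fusionPenalty n w v = 0) (f f' : TIdx n) : v f = v f' := by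
  suffices ∀ s : Finset (Fin D), ∀ f, (∀ d ∉ s, f d = f' d) → v f = v f' from
    this univ f fun d hd => absurd (mem_univ d) hd
  intro s
  induction s using Finset.induction_on with
  | empty => intro f hf; rw [funext fun d => hf d (notMem_empty d)]
  | insert a s _ ih =>
    intro f hf
    rw [← apply_update_eq_of_fusionPenalty_eq_zero hw hv (hconn a) f (f' a)]
    refine ih _ fun d hd => ?_
    rcases eq_or_ne d a with rfl | hda
    · simp
    · rw [Function.update_of_ne hda]; exact hf d (by simp [hd, hda])

lemma fusionPenalty_pos {w : ∀ d, Fin (n d) → Fin (n d) → ℝ} (hw : ∀ d i j, 0 ≤ w d i j)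
    (hconn : ∀ d, ModeConnected n d (w d)) {v : TIdx n → ℝ} (hsum : ∑ f, v f = 0)
    (hv : v ≠ 0) : 0 < fusionPenalty n w v := by
  refine (fusionPenalty_nonneg hw v).lt_of_ne' fun h => hv (funext fun f => ?_)
  have hconst := apply_eq_of_fusionPenalty_eq_zero hw hconn h
  have : (Fintype.card (TIdx n) : ℝ) * v f = 0 := by
    rw [← hsum, sum_congr rfl fun f' _ => hconst f' f, sum_const, card_univ, nsmul_eq_mul]
  exact (mul_eq_zero.1 this).resolve_left (Nat.cast_ne_zero.2 (Fintype.card_pos_iff.2 ⟨f⟩).ne')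

lemma isFusionPenalty_fusionPenalty {w : ∀ d, Fin (n d) → Fin (n d) → ℝ}
    (hw : ∀ d i j, 0 ≤ w d i j) (hconn : ∀ d, ModeConnected n d (w d)) :
    IsFusionPenalty (fusionPenalty n w) where
  continuous := continuous_fusionPenalty w
  smul _ ht := fusionPenalty_smul w ht
  add_const := fusionPenalty_add_const w
  pos _ := fusionPenalty_pos hw hconn

end Penalty

/-- **Proposition 4.3.** If every mode-`d` similarity graph is connected, then
there is a `γ_max ≥ 0` such that for all `γ ≥ γ_max` the unique minimizer of the CoCo objective
`F_γ` is the grand-mean vector `x̄·1`, where `x̄ = (1/n)⟨x, 1⟩`. -/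
theorem coco_minimizer_eq_grand_mean_for_large_gamma
    {D : ℕ} (n : Fin D → ℕ) (x : TIdx n → ℝ)
    (w : ∀ d, Fin (n d) → Fin (n d) → ℝ) (hw : ∀ d i j, 0 ≤ w d i j)
    (hconn : ∀ d, ModeConnected n d (w d)) :
    ∃ γmax : ℝ, 0 ≤ γmax ∧ ∀ γ : ℝ, γmax ≤ γ →
      (∀ u : TIdx n → ℝ,
        coco n x γ w (fun _ => (∑ f, x f) / (Fintype.card (TIdx n) : ℝ)) ≤ coco n x γ w u) ∧
      (∀ u : TIdx n → ℝ, u ≠ (fun _ => (∑ f, x f) / (Fintype.card (TIdx n) : ℝ)) →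
        coco n x γ w (fun _ => (∑ f, x f) / (Fintype.card (TIdx n) : ℝ)) < coco n x γ w u) := by
  obtain ⟨γmax, hγmax, hgrowth⟩ :=
    (isFusionPenalty_fusionPenalty hw hconn).exists_add_half_sum_sq_le x
  refine ⟨γmax, hγmax, fun γ hγ => ?_⟩
  have key (u : TIdx n → ℝ) :
      coco n x γ w (fun _ => mean x) + (1 / 2) * ∑ f, (u f - mean x) ^ 2 ≤ coco n x γ w u :=
    hgrowth γ hγ u
  refine ⟨fun u => le_trans (le_add_of_nonneg_right (by positivity)) (key u),
    fun u hu => lt_of_lt_of_le (lt_add_of_pos_right _ ?_) (key u)⟩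
  obtain ⟨f, hf⟩ : ∃ f, u f ≠ mean x := by
    by_contra! h
    exact hu (funext h)
  have : 0 < (u f - mean x) ^ 2 := by positivity [sub_ne_zero.2 hf]
  exact mul_pos one_half_pos (sum_pos' (fun _ _ => sq_nonneg _) ⟨f, mem_univ f, this⟩)
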